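/- arXiv:1910.05111 — 4 statements merged into one kernel-verified Lean document; each statement's English description precedes it below -/
import Mathlib

section
/- The function U(s,z) of the previous construction is holomorphic jointly in (s,z) on ℂ × {Re(z) > 0}. -/
/-!
For `Re w ≥ β > 0` and `s` in a compact set, the map `φⱼ(s, ·)` moves `w` by
`|exp ((s - j) w)| ≤ C e^{-jβ}` and is `(1 + C' (1 + j) e^{-jβ})`-Lipschitz. These bounds are
summable, so past a fixed index `N` the compositions `φ_{N+1} ∘ ⋯ ∘ φ_{N+k}` map a small disk
around `z₀` into a larger one inside the half-plane, have uniformly bounded Lipschitz constants,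
and are uniformly Cauchy in `k`. Composing with the uniformly continuous map `Un N` gives locally
uniform convergence of `Un n` on `ℂ × {Re z > 0}`. A locally uniform limit of holomorphic maps on
an open subset of `ℂ²` is holomorphic: by Cauchy estimates along complex lines, the Fréchet
derivatives converge uniformly as well.
-/

open Complex Metric Filter Topology

/-- `Un n s z = f (s-1, f (s-2, ..., f (s-n, z)))` where `f s z = z + exp (s z)`. -/
noncomputable def Un : ℕ → ℂ → ℂ → ℂ
  | 0, _, z => z
  | (n + 1), s, z => Un n (s - 1) z + Complex.exp ((s - 1) * Un n (s - 1) z)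

open Set

section Holomorphy

variable {E F : Type*} [NormedAddCommGroup E] [NormedSpace ℂ E]
  [NormedAddCommGroup F] [NormedSpace ℂ F]

theorem norm_fderiv_le_of_forall_mem_closedBall_norm_le {G : F → E} {x : F} {r M : ℝ}
    (hr : 0 < r) (hG : DifferentiableOn ℂ G (closedBall x r))
    (hM : ∀ y ∈ closedBall x r, ‖G y‖ ≤ M) : ‖fderiv ℂ G x‖ ≤ M / r := by
  have hM0 : 0 ≤ M := (norm_nonneg _).trans (hM x (mem_closedBall_self hr.le))
  refine ContinuousLinearMap.opNorm_le_of_unit_norm (by positivity) fun v hv => ?_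
  -- One-variable Cauchy estimate on the complex line through `x` in the direction `v`.
  have hline : MapsTo (fun w : ℂ => x + w • v) (closedBall 0 r) (closedBall x r) := by
    intro w hw
    simpa [norm_smul, hv] using hw
  have hderiv : HasDerivAt (fun w : ℂ => G (x + w • v)) (fderiv ℂ G x v) 0 := by
    have hx : HasFDerivAt G (fderiv ℂ G x) x :=
      (hG.differentiableAt (closedBall_mem_nhds x hr)).hasFDerivAt
    have hl : HasDerivAt (fun w : ℂ => x + w • v) v 0 := by
      simpa using ((hasDerivAt_id (0 : ℂ)).smul_const v).const_add x
    exact hx.comp_hasDerivAt_of_eq 0 hl (by simp)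
  rw [← hderiv.deriv]
  refine Complex.norm_deriv_le_of_forall_mem_sphere_norm_le hr ?_ fun w hw => ?_
  · refine (hG.comp (by fun_prop) hline).diffContOnCl_ball le_rfl
  · exact hM _ (hline (sphere_subset_closedBall hw))

theorem uniformCauchySeqOn_fderiv_ball {ι : Type*} {φ : Filter ι} {G : ι → F → E} {x : F}
    {r : ℝ} (hr : 0 < r) (hG : UniformCauchySeqOn G φ (closedBall x (2 * r)))
    (hGd : ∀ᶠ n in φ, DifferentiableOn ℂ (G n) (closedBall x (2 * r))) :
    UniformCauchySeqOn (fun n => fderiv ℂ (G n)) φ (ball x r) := by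
  rw [SeminormedAddGroup.uniformCauchySeqOn_iff_tendstoUniformlyOn_zero,
    SeminormedAddGroup.tendstoUniformlyOn_zero] at hG ⊢
  intro δ hδ
  filter_upwards [hG (δ * r / 2) (by positivity), hGd.prod_inl φ, hGd.prod_inr φ]
    with m hm hm₁ hm₂ y hy
  have hyr : closedBall y r ⊆ closedBall x (2 * r) := by
    refine closedBall_subset_closedBall' ?_
    linarith [mem_ball.mp hy]
  have hyx : closedBall x (2 * r) ∈ 𝓝 y :=
    mem_of_superset (isOpen_ball.mem_nhds (ball_subset_ball (by linarith) hy))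
      ball_subset_closedBall
  have hsub : HasFDerivAt (fun z => -G m.1 z + G m.2 z)
      (-fderiv ℂ (G m.1) y + fderiv ℂ (G m.2) y) y :=
    (hm₁.differentiableAt hyx).hasFDerivAt.neg.add (hm₂.differentiableAt hyx).hasFDerivAt
  calc ‖-fderiv ℂ (G m.1) y + fderiv ℂ (G m.2) y‖ ≤ δ * r / 2 / r := by
        rw [← hsub.fderiv]
        exact norm_fderiv_le_of_forall_mem_closedBall_norm_le hr
          ((hm₁.neg.add hm₂).mono hyr) fun z hz => (hm z (hyr hz)).le
    _ < δ := by field_simp; linarith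

theorem TendstoLocallyUniformlyOn.differentiableOn_of_properSpace [CompleteSpace E]
    [ProperSpace F] {ι : Type*} {φ : Filter ι} [φ.NeBot] {G : ι → F → E} {g : F → E}
    {U : Set F} (hG : TendstoLocallyUniformlyOn G g φ U)
    (hGd : ∀ᶠ n in φ, DifferentiableOn ℂ (G n) U) (hU : IsOpen U) :
    DifferentiableOn ℂ g U := by
  intro x hx
  obtain ⟨r, hr, hxr⟩ : ∃ r > 0, closedBall x (2 * r) ⊆ U := by
    obtain ⟨ε, hε, hεU⟩ := Metric.isOpen_iff.mp hU x hx
    exact ⟨ε / 3, by positivity, (closedBall_subset_ball (by linarith)).trans hεU⟩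
  have hderiv := uniformCauchySeqOn_fderiv_ball hr
    ((tendstoLocallyUniformlyOn_iff_forall_isCompact hU).mp hG _ hxr
      (isCompact_closedBall x _)).uniformCauchySeqOn
    (hGd.mono fun n hn => hn.mono hxr)
  choose! g' hg' using fun y (hy : y ∈ ball x r) =>
    cauchy_iff_exists_le_nhds.mp (hderiv.cauchy_map hy)
  have hlim : TendstoUniformlyOnFilter (fun n => fderiv ℂ (G n)) g' φ (𝓝 x) :=
    (hderiv.tendstoUniformlyOn_of_tendsto hg').tendstoUniformlyOnFilter.mono_right
      (le_principal_iff.mpr (ball_mem_nhds x hr))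
  have hdiffG : ∀ᶠ p in φ ×ˢ 𝓝 x, HasFDerivAt (G p.1) (fderiv ℂ (G p.1) p.2) p.2 := by
    filter_upwards [hGd.prod_inl (𝓝 x), (hU.eventually_mem hx).prod_inr φ] with p hp hpU
    exact (hp.differentiableAt (hU.mem_nhds hpU)).hasFDerivAt
  have hpoint : ∀ᶠ y in 𝓝 x, Tendsto (fun n => G n y) φ (𝓝 (g y)) :=
    (hU.eventually_mem hx).mono fun y hy => hG.tendsto_at hy
  exact (hasFDerivAt_of_tendstoUniformlyOnFilter hlim hdiffG hpoint).differentiableAt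
    |>.differentiableWithinAt

end Holomorphy

theorem uniformCauchySeqOn_of_dist_succ_le {β γ : Type*} [PseudoMetricSpace γ] {F : ℕ → β → γ}
    {s : Set β} {d : ℕ → ℝ} (hd0 : ∀ n, 0 ≤ d n) (hd : Summable d)
    (hF : ∀ n, ∀ x ∈ s, dist (F n x) (F (n + 1) x) ≤ d n) : UniformCauchySeqOn F atTop s := by
  rw [Metric.uniformCauchySeqOn_iff]
  intro δ hδ
  obtain ⟨N, hN⟩ := ((tendsto_sum_nat_add d).eventually (gt_mem_nhds (half_pos hδ))).exists
  have htail : ∀ m ≥ N, ∀ x ∈ s, dist (F N x) (F m x) ≤ ∑' k, d (k + N) := by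
    intro m hm x hx
    refine (dist_le_Ico_sum_of_dist_le (f := fun k => F k x) hm
      fun {k} _ _ => hF k x hx).trans ?_
    rw [Finset.sum_Ico_eq_sum_range]
    simp_rw [add_comm N]
    exact hd.comp_injective (add_left_injective N) |>.sum_le_tsum _ fun k _ => hd0 _
  refine ⟨N, fun m hm n hn x hx => ?_⟩
  calc dist (F m x) (F n x) ≤ dist (F N x) (F m x) + dist (F N x) (F n x) :=
        dist_triangle_left _ _ _
    _ < δ := by linarith [htail m hm x hx, htail n hn x hx]

theorem UniformContinuousOn.comp_uniformCauchySeqOn {ι α β γ : Type*} [UniformSpace β]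
    [UniformSpace γ] {p : Filter ι} {F : ι → α → β} {s : Set α} {t : Set β} {g : β → γ}
    (hg : UniformContinuousOn g t) (hF : UniformCauchySeqOn F p s) (hFt : ∀ n, MapsTo (F n) s t) :
    UniformCauchySeqOn (fun n => g ∘ F n) p s := by
  intro u hu
  obtain ⟨v, hv, w, hw, hvw⟩ := mem_inf_iff.mp (hg hu)
  filter_upwards [hF v hv] with m hm x hx
  have : (F m.1 x, F m.2 x) ∈ v ∩ w := ⟨hm x hx, mem_principal.mp hw ⟨hFt _ hx, hFt _ hx⟩⟩
  rw [← hvw] at this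
  exact this

theorem UniformCauchySeqOn.of_shift {α β : Type*} [UniformSpace β] {F : ℕ → α → β} {s : Set α}
    (k : ℕ) (hF : UniformCauchySeqOn (fun n => F (n + k)) atTop s) :
    UniformCauchySeqOn F atTop s := by
  intro u hu
  rw [← map_add_atTop_eq_nat k, prod_map_map_eq, eventually_map]
  exact hF u hu

/-- `composeSeq f n = f 0 ∘ f 1 ∘ ⋯ ∘ f (n - 1)`. -/
def composeSeq {α : Type*} (f : ℕ → α → α) : ℕ → α → α
  | 0 => id
  | n + 1 => composeSeq f n ∘ f n

namespace composeSeq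

variable {α : Type*} (f : ℕ → α → α)

theorem add (m n : ℕ) :
    composeSeq f (m + n) = composeSeq f m ∘ composeSeq (fun j => f (j + m)) n := by
  induction n with
  | zero => rfl
  | succ n ih => rw [← add_assoc, composeSeq, ih, add_comm m n]; rfl

theorem succ' (n : ℕ) : composeSeq f (n + 1) = f 0 ∘ composeSeq (fun j => f (j + 1)) n := by
  rw [add_comm, add]
  rfl

end composeSeq

section NearIdentity

open Finset

variable {α : Type*} [PseudoMetricSpace α] {f : ℕ → α → α} {c : α} {R ρ : ℝ} {ε χ : ℕ → ℝ}

theorem mapsTo_closedBall_sub_sum (hε : ∀ n, 0 ≤ ε n)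
    (hmove : ∀ n, ∀ z ∈ closedBall c R, dist (f n z) z ≤ ε n) (n : ℕ) :
    MapsTo (f n) (closedBall c (R - ∑ j ∈ range (n + 1), ε j))
      (closedBall c (R - ∑ j ∈ range n, ε j)) := by
  intro z hz
  rw [mem_closedBall, sum_range_succ] at hz
  rw [mem_closedBall]
  have hzR : z ∈ closedBall c R := by
    have := sum_nonneg fun j (_ : j ∈ range n) => hε j
    rw [mem_closedBall]; linarith [hε n]
  linarith [dist_triangle (f n z) z c, hmove n z hzR]

theorem dist_composeSeq_self_le (hε : ∀ n, 0 ≤ ε n)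
    (hmove : ∀ n, ∀ z ∈ closedBall c R, dist (f n z) z ≤ ε n) (n : ℕ) :
    ∀ z ∈ closedBall c (R - ∑ j ∈ range n, ε j),
      dist (composeSeq f n z) z ≤ ∑ j ∈ range n, ε j := by
  induction n with
  | zero => simp [composeSeq]
  | succ n ih =>
    intro z hz
    have hzR : z ∈ closedBall c R :=
      closedBall_subset_closedBall
        (by linarith [sum_nonneg fun j (_ : j ∈ range (n + 1)) => hε j]) hz
    calc dist (composeSeq f n (f n z)) z
        ≤ dist (composeSeq f n (f n z)) (f n z) + dist (f n z) z := dist_triangle _ _ _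
      _ ≤ ∑ j ∈ range n, ε j + ε n :=
        add_le_add (ih _ (mapsTo_closedBall_sub_sum hε hmove n hz)) (hmove n z hzR)
      _ = ∑ j ∈ range (n + 1), ε j := (sum_range_succ _ _).symm

theorem lipschitzOnWith_composeSeq {K : ℕ → NNReal} (hε : ∀ n, 0 ≤ ε n)
    (hmove : ∀ n, ∀ z ∈ closedBall c R, dist (f n z) z ≤ ε n)
    (hlip : ∀ n, LipschitzOnWith (K n) (f n) (closedBall c R)) (n : ℕ) :
    LipschitzOnWith (∏ j ∈ range n, K j) (composeSeq f n)
      (closedBall c (R - ∑ j ∈ range n, ε j)) := by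
  induction n with
  | zero => simpa [composeSeq] using LipschitzWith.id.lipschitzOnWith
  | succ n ih =>
    rw [prod_range_succ]
    refine ih.comp ((hlip n).mono (closedBall_subset_closedBall ?_))
      (mapsTo_closedBall_sub_sum hε hmove n)
    linarith [sum_nonneg fun j (_ : j ∈ range (n + 1)) => hε j]

theorem dist_composeSeq_succ_le {K : ℕ → NNReal} (hε : ∀ n, 0 ≤ ε n)
    (hmove : ∀ n, ∀ z ∈ closedBall c R, dist (f n z) z ≤ ε n)
    (hlip : ∀ n, LipschitzOnWith (K n) (f n) (closedBall c R)) (n : ℕ) {z : α}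
    (hz : z ∈ closedBall c (R - ∑ j ∈ range (n + 1), ε j)) :
    dist (composeSeq f n z) (composeSeq f (n + 1) z) ≤ (∏ j ∈ range n, K j) * ε n := by
  have hzn : z ∈ closedBall c (R - ∑ j ∈ range n, ε j) :=
    closedBall_subset_closedBall (by linarith [sum_range_succ ε n, hε n]) hz
  have hzR : z ∈ closedBall c R :=
    closedBall_subset_closedBall (by linarith [sum_nonneg fun j (_ : j ∈ range n) => hε j]) hzn
  calc dist (composeSeq f n z) (composeSeq f n (f n z))
      ≤ (∏ j ∈ range n, K j) * dist z (f n z) :=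
        (lipschitzOnWith_composeSeq hε hmove hlip n).dist_le_mul _ hzn _
          (mapsTo_closedBall_sub_sum hε hmove n hz)
    _ ≤ (∏ j ∈ range n, K j) * ε n := by gcongr; exact dist_comm z _ ▸ hmove n z hzR

theorem closedBall_subset_closedBall_sub_sum (hε : ∀ n, 0 ≤ ε n) (hεs : Summable ε)
    (hρ : ρ + ∑' n, ε n ≤ R) (n : ℕ) :
    closedBall c ρ ⊆ closedBall c (R - ∑ j ∈ range n, ε j) :=
  closedBall_subset_closedBall (by linarith [hεs.sum_le_tsum (range n) fun j _ => hε j])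

theorem composeSeq_mem_closedBall (hε : ∀ n, 0 ≤ ε n) (hεs : Summable ε)
    (hmove : ∀ n, ∀ z ∈ closedBall c R, dist (f n z) z ≤ ε n) (hρ : ρ + ∑' n, ε n ≤ R)
    {z : α} (hz : z ∈ closedBall c ρ) (n : ℕ) : composeSeq f n z ∈ closedBall c R := by
  have hzn := closedBall_subset_closedBall_sub_sum hε hεs hρ n hz
  rw [mem_closedBall] at hz ⊢
  linarith [dist_triangle (composeSeq f n z) z c, dist_composeSeq_self_le hε hmove n z hzn,
    hεs.sum_le_tsum (range n) fun j _ => hε j]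

theorem dist_composeSeq_succ_le_of_summable (hε : ∀ n, 0 ≤ ε n) (hεs : Summable ε)
    (hχ : ∀ n, 0 ≤ χ n) (hχs : Summable χ)
    (hmove : ∀ n, ∀ z ∈ closedBall c R, dist (f n z) z ≤ ε n)
    (hlip : ∀ n, LipschitzOnWith (1 + χ n).toNNReal (f n) (closedBall c R))
    (hρ : ρ + ∑' n, ε n ≤ R) {z : α} (hz : z ∈ closedBall c ρ) (n : ℕ) :
    dist (composeSeq f n z) (composeSeq f (n + 1) z) ≤ Real.exp (∑' j, χ j) * ε n := by
  refine (dist_composeSeq_succ_le hε hmove hlip n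
    (closedBall_subset_closedBall_sub_sum hε hεs hρ (n + 1) hz)).trans ?_
  gcongr
  · exact hε n
  calc ((∏ j ∈ range n, (1 + χ j).toNNReal : NNReal) : ℝ) = ∏ j ∈ range n, (1 + χ j) := by
        push_cast
        exact prod_congr rfl fun j _ => Real.coe_toNNReal _ (by linarith [hχ j])
    _ ≤ Real.exp (∑ j ∈ range n, χ j) := Real.prod_one_add_le_exp_sum _ hχ
    _ ≤ Real.exp (∑' j, χ j) := Real.exp_le_exp.mpr (hχs.sum_le_tsum _ fun j _ => hχ j)

end NearIdentity

/-- The map `φⱼ(s, w)` of the construction. -/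
noncomputable def phi (s : ℂ) (j : ℕ) (w : ℂ) : ℂ := w + exp ((s - j) * w)

theorem Un_eq_composeSeq (n : ℕ) (s : ℂ) : Un n s = composeSeq (fun j => phi s (j + 1)) n := by
  induction n generalizing s with
  | zero => rfl
  | succ n ih =>
    have hshift : (fun j : ℕ => phi s (j + 1 + 1)) = fun j => phi (s - 1) (j + 1) := by
      funext j w
      simp only [phi]
      push_cast
      ring_nf
    funext z
    rw [composeSeq.succ', hshift, ← ih]
    simp [Un, phi]

theorem differentiable_Un (n : ℕ) : Differentiable ℂ (fun p : ℂ × ℂ => Un n p.1 p.2) := by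
  induction n with
  | zero => exact differentiable_snd
  | succ n ih =>
    have hshift : Differentiable ℂ (fun p : ℂ × ℂ => Un n (p.1 - 1) p.2) :=
      ih.comp ((differentiable_fst.sub_const 1).prodMk differentiable_snd)
    exact hshift.add ((differentiable_fst.sub_const 1).mul hshift).cexp

section Estimates

variable {s w : ℂ} {a b β : ℝ}

theorem norm_exp_sub_mul_le (hs : ‖s‖ ≤ a) (hw : ‖w‖ ≤ b) (hβ : β ≤ w.re) (j : ℕ) :
    ‖exp ((s - j) * w)‖ ≤ Real.exp (a * b - j * β) := by
  rw [norm_exp, Real.exp_le_exp]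
  have hre : ((s - j) * w).re = (s * w).re - j * w.re := by simp [sub_mul]
  have hsw : (s * w).re ≤ a * b := calc
    (s * w).re ≤ ‖s‖ * ‖w‖ := (re_le_norm _).trans (norm_mul s w).le
    _ ≤ a * b := mul_le_mul hs hw (norm_nonneg w) ((norm_nonneg s).trans hs)
  have : (j : ℝ) * β ≤ j * w.re := mul_le_mul_of_nonneg_left hβ j.cast_nonneg
  linarith

theorem dist_phi_self_le (hs : ‖s‖ ≤ a) (hw : ‖w‖ ≤ b) (hβ : β ≤ w.re) (j : ℕ) :
    dist (phi s j w) w ≤ Real.exp (a * b - j * β) := by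
  simpa [phi, dist_eq_norm] using norm_exp_sub_mul_le hs hw hβ j

theorem lipschitzOnWith_phi {T : Set ℂ} (hT : Convex ℝ T) (hs : ‖s‖ ≤ a)
    (hTb : ∀ w ∈ T, ‖w‖ ≤ b) (hTβ : ∀ w ∈ T, β ≤ w.re) (j : ℕ) :
    LipschitzOnWith (Real.toNNReal (1 + (a + j) * Real.exp (a * b - j * β))) (phi s j) T := by
  have hderiv : ∀ w, HasDerivAt (phi s j) (1 + exp ((s - j) * w) * (s - j)) w := fun w =>
    (hasDerivAt_id w).add (((hasDerivAt_id w).const_mul (s - j)).cexp.congr_deriv (by simp))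
  refine hT.lipschitzOnWith_of_nnnorm_hasDerivWithin_le (fun w _ => (hderiv w).hasDerivWithinAt)
    fun w hw => ?_
  have ha : 0 ≤ a := (norm_nonneg s).trans hs
  rw [← NNReal.coe_le_coe, coe_nnnorm, Real.coe_toNNReal _ (by positivity)]
  have hsj : ‖s - j‖ ≤ a + j := (norm_sub_le _ _).trans (by simpa using hs)
  calc ‖1 + exp ((s - j) * w) * (s - j)‖ ≤ 1 + ‖exp ((s - j) * w)‖ * ‖s - j‖ := by
        simpa using norm_add_le (1 : ℂ) (exp ((s - j) * w) * (s - j))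
    _ ≤ 1 + Real.exp (a * b - j * β) * (a + j) := by
        gcongr
        exact norm_exp_sub_mul_le hs (hTb w hw) (hTβ w hw) j
    _ = 1 + (a + j) * Real.exp (a * b - j * β) := by ring

end Estimates

theorem summable_exp_sub_nat_mul (c : ℝ) {β : ℝ} (hβ : 0 < β) :
    Summable fun j : ℕ => Real.exp (c - j * β) := by
  refine ((Real.summable_pow_mul_exp_neg_nat_mul 0 hβ).mul_left (Real.exp c)).congr fun j => ?_
  rw [pow_zero, one_mul, ← Real.exp_add]
  ring_nf

theorem summable_add_mul_exp_sub_nat_mul (a c : ℝ) {β : ℝ} (hβ : 0 < β) :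
    Summable fun j : ℕ => (a + j) * Real.exp (c - j * β) := by
  refine (((summable_exp_sub_nat_mul c hβ).mul_left a).add
    ((Real.summable_pow_mul_exp_neg_nat_mul 1 hβ).mul_left (Real.exp c))).congr fun j => ?_
  rw [pow_one, mul_left_comm, ← Real.exp_add]
  ring_nf

theorem le_re_of_mem_closedBall {z₀ w : ℂ} {R : ℝ} (hR : 2 * R ≤ z₀.re)
    (hw : w ∈ closedBall z₀ R) : R ≤ w.re := by
  have := (abs_re_le_norm (w - z₀)).trans (mem_closedBall_iff_norm.mp hw)
  rw [sub_re] at this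
  linarith [(abs_le.mp this).1]

theorem exists_uniformCauchySeqOn_composeSeq_phi {s₀ z₀ : ℂ} (hz₀ : 0 < z₀.re) :
    ∃ N : ℕ, UniformCauchySeqOn
        (fun k (p : ℂ × ℂ) => (p.1, composeSeq (fun j => phi p.1 (j + N + 1)) k p.2)) atTop
        (closedBall s₀ 1 ×ˢ closedBall z₀ (z₀.re / 4)) ∧
      ∀ k, ∀ p ∈ closedBall s₀ 1 ×ˢ closedBall z₀ (z₀.re / 4),
        composeSeq (fun j => phi p.1 (j + N + 1)) k p.2 ∈ closedBall z₀ (z₀.re / 2) := by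
  set R := z₀.re / 2 with hRdef
  have hR : 0 < R := by positivity
  have h2R : 2 * R ≤ z₀.re := by linarith
  set ε : ℕ → ℝ := fun j => Real.exp ((‖s₀‖ + 1) * (‖z₀‖ + R) - j * R)
  set χ : ℕ → ℝ := fun j => (‖s₀‖ + 1 + j) * ε j
  obtain ⟨N, hN⟩ : ∃ N, z₀.re / 4 + ∑' j, ε (j + (N + 1)) ≤ R := by
    obtain ⟨N, hN⟩ := eventually_atTop.mp
      ((tendsto_sum_nat_add ε).eventually (ge_mem_nhds (half_pos hR)))
    exact ⟨N, by linarith [hN (N + 1) (by omega)]⟩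
  have hmove : ∀ s ∈ closedBall s₀ 1, ∀ j, ∀ z ∈ closedBall z₀ R,
      dist (phi s (j + N + 1) z) z ≤ ε (j + (N + 1)) := fun s hs j z hz =>
    dist_phi_self_le (norm_le_of_mem_closedBall hs) (norm_le_of_mem_closedBall hz)
      (le_re_of_mem_closedBall h2R hz) _
  have hlip : ∀ s ∈ closedBall s₀ 1, ∀ j,
      LipschitzOnWith (1 + χ (j + (N + 1))).toNNReal (phi s (j + N + 1)) (closedBall z₀ R) :=
    fun s hs j => lipschitzOnWith_phi (convex_closedBall _ _) (norm_le_of_mem_closedBall hs)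
      (fun w hw => norm_le_of_mem_closedBall hw) (fun w hw => le_re_of_mem_closedBall h2R hw) _
  have hε0 : ∀ j, 0 ≤ ε (j + (N + 1)) := fun j => (Real.exp_pos _).le
  have hχ0 : ∀ j, 0 ≤ χ (j + (N + 1)) := fun j => by positivity
  have hεs : Summable fun j => ε (j + (N + 1)) :=
    (summable_nat_add_iff (N + 1)).mpr (summable_exp_sub_nat_mul _ hR)
  have hχs : Summable fun j => χ (j + (N + 1)) :=
    (summable_nat_add_iff (N + 1)).mpr (summable_add_mul_exp_sub_nat_mul _ _ hR)
  refine ⟨N, uniformCauchySeqOn_of_dist_succ_le (fun k => by positivity)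
      (hεs.mul_left (Real.exp (∑' j, χ (j + (N + 1))))) fun k p hp => ?_,
    fun k p hp => composeSeq_mem_closedBall hε0 hεs (hmove p.1 hp.1) hN hp.2 k⟩
  simpa [Prod.dist_eq] using dist_composeSeq_succ_le_of_summable hε0 hεs hχ0 hχs
    (hmove p.1 hp.1) (hlip p.1 hp.1) hN hp.2 k

theorem uniformCauchySeqOn_Un {s₀ z₀ : ℂ} (hz₀ : 0 < z₀.re) :
    UniformCauchySeqOn (fun n (p : ℂ × ℂ) => Un n p.1 p.2) atTop
      (closedBall s₀ 1 ×ˢ closedBall z₀ (z₀.re / 4)) := by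
  obtain ⟨N, htail, hmaps⟩ := exists_uniformCauchySeqOn_composeSeq_phi (s₀ := s₀) hz₀
  have hUN : UniformContinuousOn (fun q : ℂ × ℂ => Un N q.1 q.2)
      (closedBall s₀ 1 ×ˢ closedBall z₀ (z₀.re / 2)) :=
    ((isCompact_closedBall _ _).prod (isCompact_closedBall _ _)).uniformContinuousOn_of_continuous
      (differentiable_Un N).continuous.continuousOn
  refine UniformCauchySeqOn.of_shift N ?_
  convert hUN.comp_uniformCauchySeqOn htail fun k p hp => ⟨hp.1, hmaps k p hp⟩ using 1
  funext k p
  simp [add_comm k N, Un_eq_composeSeq, composeSeq.add]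

theorem stmt_8 (U : ℂ → ℂ → ℂ)
    (hU : ∀ (s z : ℂ), 0 < z.re → Tendsto (fun n => Un n s z) atTop (nhds (U s z))) :
    DifferentiableOn ℂ (fun p : ℂ × ℂ => U p.1 p.2) {p : ℂ × ℂ | 0 < p.2.re} := by
  have hopen : IsOpen {p : ℂ × ℂ | 0 < p.2.re} :=
    isOpen_lt continuous_const (continuous_re.comp continuous_snd)
  refine TendstoLocallyUniformlyOn.differentiableOn_of_properSpace (φ := atTop)
    (G := fun n p => Un n p.1 p.2) ?_
    (Eventually.of_forall fun n => (differentiable_Un n).differentiableOn) hopen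
  refine tendstoLocallyUniformlyOn_of_forall_exists_nhds fun p (hp : 0 < p.2.re) => ⟨_,
    mem_nhdsWithin_of_mem_nhds (prod_mem_nhds (closedBall_mem_nhds _ one_pos)
      (closedBall_mem_nhds _ (by positivity))),
    (uniformCauchySeqOn_Un hp).tendstoUniformlyOn_of_tendsto fun q hq => hU q.1 q.2 ?_⟩
  linarith [le_re_of_mem_closedBall (by linarith) hq.2]
end

section
/- Fix z with Re(z) > 0. Then (U(s+1,z) − U(s,z))/e^{sz} → 1 as |s| → ∞ in any closed subsector π/2 < κ ≤ |arg(sz)| ≤ π; equivalently U(s+1) − U(s) ∼ e^{sz} there. -/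
open Complex Metric Filter Topology

/-!
Passing to the limit in the recursion of `Un` gives `U (s + 1) = U s + exp (s U s)`, so the
quotient equals `exp (s (U s - z))` and it suffices that `s (U s - z) → 0`. Put
`q = exp (-Re z / 2)`. Along the orbit `Un n (s - j) z` the `i`-th step adds `exp ((s - i) u)` with
`u` near `z`, and `Re ((s - i) z) = Re (s z) - i Re z`; as long as `(‖s‖ + 1) exp (Re (s z))` is
small, the drift `‖s - i‖ ‖u - z‖` costs at most half of `i Re z`, so the step has size at most
`exp (Re (s z)) q ^ i` and `‖U s - z‖ ≤ exp (Re (s z)) q / (1 - q)`. In the sector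
`Re (s z) ≤ -c ‖s‖` with `c > 0`, so `(‖s‖ + 1) exp (Re (s z)) → 0`.
-/

lemma Un_succ_add_one (n : ℕ) (s w : ℂ) :
    Un (n + 1) (s + 1) w = Un n s w + Complex.exp (s * Un n s w) := by
  simp only [Un, add_sub_cancel_right]

lemma eq_add_exp_of_tendsto_Un {s w u v : ℂ}
    (hu : Tendsto (fun n => Un n s w) atTop (𝓝 u))
    (hv : Tendsto (fun n => Un n (s + 1) w) atTop (𝓝 v)) :
    v = u + Complex.exp (s * u) := by
  have hv' : Tendsto (fun n => Un n s w + Complex.exp (s * Un n s w)) atTop (𝓝 v) :=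
    (hv.comp (tendsto_add_atTop_nat 1)).congr (Un_succ_add_one · s w)
  exact tendsto_nhds_unique hv' (hu.add ((Complex.continuous_exp.tendsto _).comp (hu.const_mul s)))

lemma re_mul_le_re_mul_add (t u w : ℂ) : (t * u).re ≤ (t * w).re + ‖t‖ * ‖u - w‖ := by
  have h : t * u = t * w + t * (u - w) := by ring
  rw [h, add_re, ← norm_mul]
  exact add_le_add_right (re_le_norm _) _

lemma norm_Un_sub_le {s z : ℂ} (hz : 0 < z.re)
    (hs : (‖s‖ + 1) * Real.exp (s * z).re / (1 - Real.exp (-(z.re / 2))) ≤ z.re / 2) (n j : ℕ) :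
    ‖Un n (s - j) z - z‖ ≤
      Real.exp (s * z).re * Real.exp (-(z.re / 2)) ^ (j + 1) / (1 - Real.exp (-(z.re / 2))) := by
  set a := z.re
  set E := Real.exp (s * z).re
  set q := Real.exp (-(a / 2))
  have hq0 : 0 < q := Real.exp_pos _
  have hq1 : 0 < 1 - q := sub_pos.mpr (Real.exp_lt_one_iff.mpr (by linarith))
  induction n generalizing j with
  | zero => simp only [Un, sub_self, norm_zero]; positivity
  | succ n ih =>
    set m := j + 1
    set u := Un n (s - m) z
    have hrec : Un (n + 1) (s - j) z - z = (u - z) + Complex.exp ((s - m) * u) := by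
      simp only [Un, u, m]; push_cast; ring_nf
    have hum : ‖u - z‖ ≤ E * q ^ (m + 1) / (1 - q) := ih m
    have hm : (1 : ℝ) ≤ m := by simp [m]
    have hdrift : ‖s - m‖ * ‖u - z‖ ≤ m * a / 2 := calc
      ‖s - m‖ * ‖u - z‖ ≤ (m * (‖s‖ + 1)) * (E * q ^ (m + 1) / (1 - q)) := by
        gcongr
        calc ‖s - m‖ ≤ ‖s‖ + m := by simpa using norm_sub_le s (m : ℂ)
          _ ≤ m * (‖s‖ + 1) := by nlinarith [norm_nonneg s]
      _ = m * ((‖s‖ + 1) * E / (1 - q)) * q ^ (m + 1) := by ring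
      _ ≤ m * (a / 2) * 1 := by
        gcongr
        exact pow_le_one₀ hq0.le (Real.exp_le_one_iff.mpr (by linarith))
      _ = m * a / 2 := by ring
    have hre : ((s - m) * u).re ≤ (s * z).re - m * (a / 2) := by
      have h := re_mul_le_re_mul_add (s - m) u z
      have hsz : ((s - m) * z).re = (s * z).re - m * a := by simp [sub_mul, a]
      linarith
    have hstep : ‖Complex.exp ((s - m) * u)‖ ≤ E * q ^ m := by
      rw [norm_exp, show E * q ^ m = Real.exp ((s * z).re - m * (a / 2)) by
        rw [← Real.exp_nat_mul, ← Real.exp_add]; ring_nf]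
      exact Real.exp_le_exp.mpr hre
    calc ‖Un (n + 1) (s - j) z - z‖ ≤ ‖u - z‖ + ‖Complex.exp ((s - m) * u)‖ := by
          rw [hrec]; exact norm_add_le _ _
      _ ≤ E * q ^ (m + 1) / (1 - q) + E * q ^ m := add_le_add hum hstep
      _ = E * q ^ (j + 1) / (1 - q) := by field_simp; ring

lemma norm_sub_le_of_tendsto_Un {s z u : ℂ} (hz : 0 < z.re)
    (hs : (‖s‖ + 1) * Real.exp (s * z).re / (1 - Real.exp (-(z.re / 2))) ≤ z.re / 2)
    (hu : Tendsto (fun n => Un n s z) atTop (𝓝 u)) :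
    ‖u - z‖ ≤ Real.exp (s * z).re * Real.exp (-(z.re / 2)) / (1 - Real.exp (-(z.re / 2))) :=
  le_of_tendsto' (hu.sub_const z).norm fun n => by simpa using norm_Un_sub_le hz hs n 0

lemma exists_re_le_neg_mul_norm_of_le_abs_arg {κ : ℝ} (hκ : Real.pi / 2 < κ) :
    ∃ c > 0, ∀ w : ℂ, κ ≤ |w.arg| → w.re ≤ -(c * ‖w‖) := by
  set κ' := min κ Real.pi
  refine ⟨-Real.cos κ', neg_pos.mpr (Real.cos_neg_of_pi_div_two_lt_of_lt ?_ ?_), fun w hw => ?_⟩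
  · exact lt_min hκ (by linarith [Real.pi_pos])
  · linarith [min_le_right κ Real.pi, Real.pi_pos]
  have hcos : Real.cos |w.arg| ≤ Real.cos κ' :=
    Real.cos_le_cos_of_nonneg_of_le_pi (le_min (by linarith [Real.pi_pos]) Real.pi_pos.le)
      (abs_arg_le_pi w) (min_le_left _ _ |>.trans hw)
  rw [Real.cos_abs] at hcos
  rw [← norm_mul_cos_arg w]
  nlinarith [norm_nonneg w]

lemma tendsto_add_one_mul_exp_neg_mul {b : ℝ} (hb : 0 < b) :
    Tendsto (fun r => (r + 1) * Real.exp (-b * r)) atTop (𝓝 0) := by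
  simpa [add_mul] using (tendsto_rpow_mul_exp_neg_mul_atTop_nhds_zero 1 b hb).add
    (tendsto_rpow_mul_exp_neg_mul_atTop_nhds_zero 0 b hb)

lemma tendsto_add_one_mul_exp_re {z : ℂ} {c : ℝ} (hc : 0 < c) {l : Filter ℂ}
    (hl : Tendsto norm l atTop) (hre : ∀ᶠ s in l, (s * z).re ≤ -(c * ‖s‖)) :
    Tendsto (fun s => (‖s‖ + 1) * Real.exp (s * z).re) l (𝓝 0) := by
  refine squeeze_zero' (.of_forall fun s => by positivity) ?_
    ((tendsto_add_one_mul_exp_neg_mul hc).comp hl)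
  filter_upwards [hre] with s hs
  simp only [Function.comp_apply, neg_mul]
  gcongr

lemma tendsto_mul_sub_of_tendsto_Un {z : ℂ} (hz : 0 < z.re) {u : ℂ → ℂ}
    (hu : ∀ s, Tendsto (fun n => Un n s z) atTop (𝓝 (u s))) {l : Filter ℂ}
    (hE : Tendsto (fun s => (‖s‖ + 1) * Real.exp (s * z).re) l (𝓝 0)) :
    Tendsto (fun s => s * (u s - z)) l (𝓝 0) := by
  set q := Real.exp (-(z.re / 2))
  have hq0 : 0 < q := Real.exp_pos _
  have hq1 : 0 < 1 - q := sub_pos.mpr (Real.exp_lt_one_iff.mpr (by linarith))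
  have hsmall : ∀ᶠ s in l, (‖s‖ + 1) * Real.exp (s * z).re / (1 - q) ≤ z.re / 2 :=
    (hE.div_const _).eventually (ge_mem_nhds (by simpa using half_pos hz))
  refine squeeze_zero_norm' ?_ (by simpa using hE.mul_const (q / (1 - q)))
  filter_upwards [hsmall] with s hs
  rw [norm_mul]
  calc ‖s‖ * ‖u s - z‖ ≤ (‖s‖ + 1) * (Real.exp (s * z).re * q / (1 - q)) := by
        gcongr
        · linarith
        · exact norm_sub_le_of_tendsto_Un hz hs (hu s)
    _ = (‖s‖ + 1) * Real.exp (s * z).re * (q / (1 - q)) := by ring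

lemma tendsto_sub_div_exp_of_tendsto_Un {z : ℂ} (hz : 0 < z.re) {u : ℂ → ℂ}
    (hu : ∀ s, Tendsto (fun n => Un n s z) atTop (𝓝 (u s))) {l : Filter ℂ}
    (hE : Tendsto (fun s => (‖s‖ + 1) * Real.exp (s * z).re) l (𝓝 0)) :
    Tendsto (fun s => (u (s + 1) - u s) / Complex.exp (s * z)) l (𝓝 1) := by
  have hquot : ∀ s, (u (s + 1) - u s) / Complex.exp (s * z) = Complex.exp (s * (u s - z)) := by
    intro s
    rw [eq_add_exp_of_tendsto_Un (hu s) (hu (s + 1)), add_sub_cancel_left, ← Complex.exp_sub,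
      mul_sub]
  simpa only [hquot, Function.comp_def, mul_zero, Complex.exp_zero] using
    (Complex.continuous_exp.tendsto 0).comp (tendsto_mul_sub_of_tendsto_Un hz hu hE)

theorem stmt_12 (z : ℂ) (hz : 0 < z.re) (U : ℂ → ℂ → ℂ)
    (hU : ∀ (s w : ℂ), 0 < w.re → Tendsto (fun n => Un n s w) atTop (nhds (U s w))) :
    ∀ κ : ℝ, Real.pi / 2 < κ →
      ∀ ε > (0 : ℝ), ∃ R : ℝ, ∀ s : ℂ,
        κ ≤ |(s * z).arg| → R ≤ ‖s‖ → ‖(U (s + 1) z - U s z) / Complex.exp (s * z) - 1‖ < ε := by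
  intro κ hκ ε hε
  obtain ⟨c, hc, hsector⟩ := exists_re_le_neg_mul_norm_of_le_abs_arg hκ
  set l := comap norm atTop ⊓ 𝓟 {s : ℂ | κ ≤ |(s * z).arg|}
  have hl : Tendsto norm l atTop := tendsto_comap.mono_left inf_le_left
  have hre : ∀ᶠ s in l, (s * z).re ≤ -(c * ‖z‖ * ‖s‖) :=
    eventually_inf_principal.mpr <| .of_forall fun s hs =>
      (hsector (s * z) hs).trans_eq (by rw [norm_mul]; ring)
  have hlim := tendsto_sub_div_exp_of_tendsto_Un hz (fun s => hU s z hz)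
    (tendsto_add_one_mul_exp_re (mul_pos hc (norm_pos_iff.mpr fun h => by simp [h] at hz)) hl hre)
  obtain ⟨R, hR⟩ := eventually_atTop.mp <| eventually_comap.mp <|
    eventually_inf_principal.mp (hlim.eventually (ball_mem_nhds 1 hε))
  exact ⟨R, fun s hs hsR => by simpa [dist_eq_norm] using hR _ hsR s rfl hs⟩
end

section
/- Fix z with Re(z) > 0. Then (U(s,z) − z)·(1 − e^{−z})/e^{(s−1)z} → 1 as |s| → ∞ in any closed subsector π/2 < κ ≤ |arg(sz)| ≤ π; i.e., U(s) − z ∼ e^{(s−1)z}/(1 − e^{−z}). -/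
open Complex Metric Filter Topology

/-! The function `T(t) = expTail z t = e^{(t-1)z} / (1 - e^{-z}) = ∑_{j ≥ 1} e^{(t-j)z}` satisfies
`T(t) - T(t-1) = e^{(t-1)z}`, while the iterates `Uₙ(t) = Un n t z` satisfy
`Uₙ₊₁(t) - Uₙ(t-1) = e^{(t-1)Uₙ(t-1)}`. When `Re(tz) → -∞` the iterates stay within
`O(e^{(t-2)z})` of `z`, so the two exponents differ by a perturbation `(t-1)(Uₙ(t-1) - z)` that is
small uniformly along the backward orbit `t - 1, t - 2, …`. Comparing the two difference equations
term by term then gives `‖Uₙ(t) - z - (T(t) - T(t-n))‖ ≤ c ‖e^{(t-1)z}‖` for any prescribed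
`c > 0`, and `T(t-n) → 0`. -/

section

variable {z : ℂ}

lemma norm_exp_neg_lt_one (hz : 0 < z.re) : ‖exp (-z)‖ < 1 := by
  rw [norm_exp, neg_re, Real.exp_lt_one_iff]
  linarith

lemma one_sub_exp_neg_ne_zero (hz : 0 < z.re) : 1 - exp (-z) ≠ 0 := fun h =>
  (norm_exp_neg_lt_one hz).ne (by rw [← sub_eq_zero.mp h, norm_one])

lemma norm_exp_sub_one_mul (t : ℂ) : ‖exp ((t - 1) * z)‖ = Real.exp (-z.re) * ‖exp (t * z)‖ := by
  rw [norm_exp, norm_exp, ← Real.exp_add, sub_mul, one_mul, sub_re]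
  ring_nf

lemma norm_exp_sub_exp_le {w x : ℂ} (h : ‖w - x‖ ≤ 1) :
    ‖exp w - exp x‖ ≤ 2 * ‖w - x‖ * ‖exp x‖ := by
  have hfactor : exp w - exp x = exp x * (exp (w - x) - 1) := by
    rw [mul_sub, mul_one, ← exp_add, add_sub_cancel]
  rw [hfactor, norm_mul, mul_comm]
  exact mul_le_mul_of_nonneg_right (norm_exp_sub_one_le h) (norm_nonneg _)

noncomputable def expTail (z t : ℂ) : ℂ := exp ((t - 1) * z) / (1 - exp (-z))

lemma expTail_eq_expTail_sub_one_add (hz : 0 < z.re) (t : ℂ) :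
    expTail z t = expTail z (t - 1) + exp ((t - 1) * z) := by
  have h := one_sub_exp_neg_ne_zero hz
  rw [expTail, expTail, div_add' _ _ _ h, show (t - 1 - 1) * z = (t - 1) * z + -z by ring, exp_add]
  ring_nf

lemma expTail_sub_natCast (z t : ℂ) (n : ℕ) : expTail z (t - n) = expTail z t * exp (-z) ^ n := by
  rw [expTail, expTail, ← exp_nat_mul, div_mul_eq_mul_div, ← exp_add]
  ring_nf

lemma tendsto_expTail_sub_natCast (hz : 0 < z.re) (t : ℂ) :
    Tendsto (fun n : ℕ => expTail z (t - n)) atTop (𝓝 0) := by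
  simp_rw [expTail_sub_natCast]
  simpa using (tendsto_pow_atTop_nhds_zero_of_norm_lt_one (norm_exp_neg_lt_one hz)).const_mul
    (expTail z t)

lemma norm_expTail_sub_expTail_sub_natCast_le (hz : 0 ≤ z.re) (t : ℂ) (n : ℕ) :
    ‖expTail z t - expTail z (t - n)‖ ≤ 2 / ‖1 - exp (-z)‖ * ‖exp ((t - 1) * z)‖ := by
  have hpow : ‖exp (-z) ^ n‖ ≤ 1 := by
    rw [norm_pow, norm_exp, neg_re]
    exact pow_le_one₀ (Real.exp_nonneg _) (Real.exp_le_one_iff.mpr (by linarith))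
  calc ‖expTail z t - expTail z (t - n)‖
      ≤ ‖expTail z t‖ + ‖expTail z t‖ * ‖exp (-z) ^ n‖ := by
        rw [expTail_sub_natCast, ← norm_mul]; exact norm_sub_le _ _
    _ ≤ 2 * ‖expTail z t‖ := by nlinarith [norm_nonneg (expTail z t)]
    _ = 2 / ‖1 - exp (-z)‖ * ‖exp ((t - 1) * z)‖ := by rw [expTail, norm_div]; ring

/-- `C` bounds `‖Uₙ(t) - z‖ / ‖e^{(t-2)z}‖`, so this says that the perturbation of the exponent
stays below `η` at every point of the backward orbit of `t`. -/
def SmallAlongShifts (z : ℂ) (C η : ℝ) (t : ℂ) : Prop :=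
  ∀ m : ℕ, ‖t - (m + 1)‖ * (C * ‖exp ((t - (m + 2)) * z)‖) ≤ η

lemma SmallAlongShifts.sub_one {C η : ℝ} {t : ℂ} (h : SmallAlongShifts z C η t) :
    SmallAlongShifts z C η (t - 1) := fun m => by
  rw [show t - 1 - (m + 1) = t - ((m + 1 : ℕ) + 1) by push_cast; ring,
    show t - 1 - (m + 2) = t - ((m + 1 : ℕ) + 2) by push_cast; ring]
  exact h (m + 1)

theorem norm_Un_sub_sub_expTail_le (hz : 0 < z.re) {c η : ℝ} (hc : 0 ≤ c) (hη : η ≤ 1)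
    (hηc : 2 * η ≤ c * (1 - Real.exp (-z.re))) (n : ℕ) :
    ∀ t, SmallAlongShifts z (2 / ‖1 - exp (-z)‖ + c) η t →
      ‖Un n t z - z - (expTail z t - expTail z (t - n))‖ ≤ c * ‖exp ((t - 1) * z)‖ := by
  induction n with
  | zero => intro t _; simp only [Un, Nat.cast_zero, sub_zero, sub_self, norm_zero]; positivity
  | succ n ih =>
    intro t hsmall
    set u := Un n (t - 1) z
    set E := u - z - (expTail z (t - 1) - expTail z (t - 1 - n))
    have hE : ‖E‖ ≤ c * ‖exp ((t - 1 - 1) * z)‖ := ih (t - 1) hsmall.sub_one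
    have hu : ‖u - z‖ ≤ (2 / ‖1 - exp (-z)‖ + c) * ‖exp ((t - 1 - 1) * z)‖ := by
      calc ‖u - z‖ = ‖E + (expTail z (t - 1) - expTail z (t - 1 - n))‖ := by
            simp only [E, sub_add_cancel]
        _ ≤ _ := norm_add_le _ _
        _ ≤ _ := add_le_add hE (norm_expTail_sub_expTail_sub_natCast_le hz.le _ _)
        _ = _ := by ring
    have hperturb : ‖(t - 1) * u - (t - 1) * z‖ ≤ η := by
      have h0 := hsmall 0
      rw [← mul_sub, norm_mul]
      push_cast at h0
      rw [zero_add, zero_add] at h0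
      refine le_trans (mul_le_mul_of_nonneg_left ?_ (norm_nonneg _)) h0
      rwa [sub_sub, one_add_one_eq_two] at hu
    have hstep : Un (n + 1) t z - z - (expTail z t - expTail z (t - (n + 1 : ℕ)))
        = E + (exp ((t - 1) * u) - exp ((t - 1) * z)) := by
      rw [expTail_eq_expTail_sub_one_add hz t, Nat.cast_succ,
        show t - ((n : ℂ) + 1) = t - 1 - n by ring]
      simp only [Un, E, u]
      ring
    have hshift := norm_exp_sub_one_mul (z := z) (t - 1)
    rw [hstep]
    calc ‖E + (exp ((t - 1) * u) - exp ((t - 1) * z))‖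
        ≤ c * ‖exp ((t - 1 - 1) * z)‖ + 2 * η * ‖exp ((t - 1) * z)‖ := by
          refine (norm_add_le _ _).trans (add_le_add hE ?_)
          refine (norm_exp_sub_exp_le (hperturb.trans hη)).trans ?_
          gcongr
      _ ≤ c * ‖exp ((t - 1 - 1) * z)‖ + c * (1 - Real.exp (-z.re)) * ‖exp ((t - 1) * z)‖ := by
          gcongr
      _ = c * ‖exp ((t - 1) * z)‖ := by rw [hshift]; ring

theorem norm_sub_sub_expTail_le_of_tendsto (hz : 0 < z.re) {c η : ℝ} (hc : 0 ≤ c) (hη : η ≤ 1)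
    (hηc : 2 * η ≤ c * (1 - Real.exp (-z.re))) {s w : ℂ}
    (hsmall : SmallAlongShifts z (2 / ‖1 - exp (-z)‖ + c) η s)
    (hlim : Tendsto (fun n => Un n s z) atTop (𝓝 w)) :
    ‖w - z - expTail z s‖ ≤ c * ‖exp ((s - 1) * z)‖ := by
  have hE : Tendsto (fun n : ℕ => Un n s z - z - (expTail z s - expTail z (s - n))) atTop
      (𝓝 (w - z - (expTail z s - 0))) :=
    (hlim.sub_const z).sub (tendsto_const_nhds.sub (tendsto_expTail_sub_natCast hz s))
  simpa using le_of_tendsto' hE.norm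
    (fun n => norm_Un_sub_sub_expTail_le hz hc hη hηc n s hsmall)

lemma add_mul_exp_neg_mul_le {x y a : ℝ} (hx : 0 ≤ x) (hy : 0 ≤ y) (ha : 0 < a) :
    (x + y) * Real.exp (-(y * a)) ≤ x + a⁻¹ := by
  have hxe : x * Real.exp (-(y * a)) ≤ x :=
    mul_le_of_le_one_right hx (Real.exp_le_one_iff.mpr (by nlinarith))
  have hye : y * Real.exp (-(y * a)) ≤ a⁻¹ := by
    rw [Real.exp_neg, ← div_eq_mul_inv, div_le_iff₀ (Real.exp_pos _), inv_mul_eq_div,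
      le_div_iff₀ ha]
    linarith [Real.add_one_le_exp (y * a)]
  linarith [add_mul x y (Real.exp (-(y * a)))]

lemma re_le_cos_mul_norm_of_le_abs_arg {w : ℂ} {κ : ℝ} (hκ : 0 ≤ κ) (h : κ ≤ |w.arg|) :
    w.re ≤ Real.cos κ * ‖w‖ := by
  rw [← norm_mul_cos_arg w, ← Real.cos_abs (arg w), mul_comm]
  exact mul_le_mul_of_nonneg_right
    (Real.cos_le_cos_of_nonneg_of_le_pi hκ (abs_arg_le_pi w) h) (norm_nonneg w)

lemma smallAlongShifts_of_re_le (hz : 0 < z.re) {C d η : ℝ} {s : ℂ} (hC : 0 ≤ C)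
    (hre : (s * z).re ≤ -(d * ‖s‖)) (hη : C * (‖s‖ + z.re⁻¹) * Real.exp (-(d * ‖s‖)) ≤ η) :
    SmallAlongShifts z C η s := fun m => by
  have hnorm : ‖s - (m + 1)‖ ≤ ‖s‖ + (m + 1) := by
    refine (norm_sub_le _ _).trans (le_of_eq ?_)
    exact_mod_cast congrArg (‖s‖ + ·) (Complex.norm_natCast (m + 1))
  have hexp : ‖exp ((s - (m + 2)) * z)‖ ≤ Real.exp (-(d * ‖s‖)) * Real.exp (-((m + 1) * z.re)) := by
    have hre' : ((s - (m + 2)) * z).re = (s * z).re - (m + 2) * z.re := by simp [sub_mul]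
    rw [norm_exp, ← Real.exp_add, hre']
    gcongr
    linarith
  calc ‖s - (m + 1)‖ * (C * ‖exp ((s - (m + 2)) * z)‖)
      ≤ (‖s‖ + (m + 1)) * (C * (Real.exp (-(d * ‖s‖)) * Real.exp (-((m + 1) * z.re)))) := by
        gcongr
    _ = C * Real.exp (-(d * ‖s‖)) * ((‖s‖ + (m + 1)) * Real.exp (-((m + 1) * z.re))) := by ring
    _ ≤ C * Real.exp (-(d * ‖s‖)) * (‖s‖ + z.re⁻¹) := by
        gcongr
        exact add_mul_exp_neg_mul_le (norm_nonneg _) (by positivity) hz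
    _ ≤ η := by linarith

lemma tendsto_mul_add_mul_exp_neg_mul_atTop (C A : ℝ) {d : ℝ} (hd : 0 < d) :
    Tendsto (fun x => C * (x + A) * Real.exp (-(d * x))) atTop (𝓝 0) := by
  have hdx : Tendsto (fun x => d * x) atTop atTop := tendsto_id.const_mul_atTop hd
  have h1 : Tendsto (fun x => d * x * Real.exp (-(d * x))) atTop (𝓝 0) :=
    ((Real.tendsto_pow_mul_exp_neg_atTop_nhds_zero 1).comp hdx).congr fun x => by simp
  have h2 : Tendsto (fun x => Real.exp (-(d * x))) atTop (𝓝 0) :=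
    Real.tendsto_exp_neg_atTop_nhds_zero.comp hdx
  convert (h1.const_mul (C / d)).add (h2.const_mul (C * A)) using 1
  · ext x; field_simp
  · simp

lemma norm_div_exp_sub_one_le (hz : 0 < z.re) {s w : ℂ} {c : ℝ}
    (h : ‖w - z - expTail z s‖ ≤ c * ‖exp ((s - 1) * z)‖) :
    ‖(w - z) * (1 - exp (-z)) / exp ((s - 1) * z) - 1‖ ≤ c * ‖1 - exp (-z)‖ := by
  have hb := one_sub_exp_neg_ne_zero hz
  have hexp : exp ((s - 1) * z) ≠ 0 := exp_ne_zero _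
  calc ‖(w - z) * (1 - exp (-z)) / exp ((s - 1) * z) - 1‖
      = ‖w - z - expTail z s‖ * ‖1 - exp (-z)‖ / ‖exp ((s - 1) * z)‖ := by
        rw [← norm_mul, ← norm_div, expTail]; congr 1; field_simp
    _ ≤ c * ‖exp ((s - 1) * z)‖ * ‖1 - exp (-z)‖ / ‖exp ((s - 1) * z)‖ := by gcongr
    _ = c * ‖1 - exp (-z)‖ := by field_simp

end

theorem stmt_13 (z : ℂ) (hz : 0 < z.re) (U : ℂ → ℂ → ℂ)
    (hU : ∀ (s w : ℂ), 0 < w.re → Tendsto (fun n => Un n s w) atTop (nhds (U s w))) :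
    ∀ κ : ℝ, Real.pi / 2 < κ →
      ∀ ε > (0 : ℝ), ∃ R : ℝ, ∀ s : ℂ,
        κ ≤ |(s * z).arg| → R ≤ ‖s‖ → ‖(U s z - z) * (1 - Complex.exp (-z)) / Complex.exp ((s - 1) * z) - 1‖ < ε := by
  intro κ hκ ε hε
  set b := ‖1 - exp (-z)‖
  have hbpos : 0 < b := norm_pos_iff.mpr (one_sub_exp_neg_ne_zero hz)
  set c := ε / (2 * b)
  set η := min 1 (c * (1 - Real.exp (-z.re)) / 2)
  -- `min κ π` keeps `d` positive when `κ > π`, where the claim is vacuous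
  set d := -Real.cos (min κ Real.pi) * ‖z‖
  have hd : 0 < d := by
    have : Real.cos (min κ Real.pi) < 0 := Real.cos_neg_of_pi_div_two_lt_of_lt
      (lt_min hκ (by linarith [Real.pi_pos])) (by linarith [min_le_right κ Real.pi, Real.pi_pos])
    exact mul_pos (by linarith) (norm_pos_iff.mpr fun h => by simp [h] at hz)
  have hden : 0 < 1 - Real.exp (-z.re) := sub_pos.mpr (Real.exp_lt_one_iff.mpr (by linarith))
  have hη : 0 < η := lt_min one_pos (by positivity)
  obtain ⟨R, hR⟩ := eventually_atTop.mp
    ((tendsto_mul_add_mul_exp_neg_mul_atTop (2 / b + c) z.re⁻¹ hd).eventually (ge_mem_nhds hη))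
  refine ⟨R, fun s hs hRs => ?_⟩
  have hre : (s * z).re ≤ -(d * ‖s‖) := by
    have := re_le_cos_mul_norm_of_le_abs_arg (w := s * z)
      (le_min (by linarith [Real.pi_pos]) Real.pi_pos.le) ((min_le_left _ _).trans hs)
    rw [norm_mul] at this; linarith
  have hsmall := smallAlongShifts_of_re_le hz (by positivity) hre (hR _ hRs)
  have hU' := norm_sub_sub_expTail_le_of_tendsto hz (by positivity) (min_le_left _ _)
    (by linarith [min_le_right 1 (c * (1 - Real.exp (-z.re)) / 2)]) hsmall (hU s z hz)
  have hcb : c * b = ε / 2 := by simp only [c]; field_simp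
  linarith [norm_div_exp_sub_one_le hz hU']
end

section
/- Uniqueness under decay: fix z with Re(z) > 0. If y(s) is holomorphic, satisfies y(s+1) − y(s) = e^{s·y(s)}, and y(s) → z as Re(s) → −∞ (uniformly on compacts in Im(s)), then y(s) = U(s, z). -/
open Complex Metric Filter Topology

/-!
Write `f_c w = w + exp (c w)`. The functional equation gives `y t = Un n t (y (t - n))` for every
`n`, so it suffices to show that `Un n t` is Lipschitz near `z`, uniformly in `n`: then
`y (t - n) → z` forces `Un n t z → y t`, while `Un n t z → U t z`.
For `‖u - z‖ ≤ Re z / 2` the map `f_{t - n}` moves `u` by `‖exp ((t - n) u)‖ ≤ A qⁿ` with `q < 1`,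
and its derivative is `1 + O(n qⁿ)`. Once `t` is shifted far enough to the left, the total
displacement `∑ A qⁿ` is so small that all partial orbits starting near `z` stay in a fixed ball
around `z`, and there `Un n t` is Lipschitz with constant `exp (∑ₙ (‖t‖ + n) A qⁿ)`. The shift is
undone by `U s w = Un k s (U (s - k) w)`.
-/

open Finset

lemma Un_succ (n : ℕ) (s w : ℂ) :
    Un (n + 1) s w = Un n (s - 1) w + Complex.exp ((s - 1) * Un n (s - 1) w) := rfl

lemma Un_succ_sub_natCast (m j : ℕ) (t w : ℂ) :
    Un (m + 1) (t - j) w = Un m (t - (j + 1 : ℕ)) w +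
      Complex.exp ((t - (j + 1 : ℕ)) * Un m (t - (j + 1 : ℕ)) w) := by
  rw [Un_succ, show t - (j : ℂ) - 1 = t - (j + 1 : ℕ) by push_cast; ring]

lemma continuous_Un (n : ℕ) (s : ℂ) : Continuous (Un n s) := by
  induction n generalizing s with
  | zero => exact continuous_id
  | succ n ih => exact (ih _).add (continuous_const.mul (ih _)).cexp

lemma Un_add (k m : ℕ) (s w : ℂ) : Un (k + m) s w = Un k s (Un m (s - k) w) := by
  induction k generalizing s with
  | zero => simp [Un]
  | succ k ih =>
    rw [show k + 1 + m = k + m + 1 by omega, Un_succ, ih, Un_succ,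
      show s - 1 - (k : ℂ) = s - (k + 1 : ℕ) by push_cast; ring]

lemma Un_apply_sub_natCast {y : ℂ → ℂ} (hy : ∀ s, y (s + 1) - y s = Complex.exp (s * y s))
    (n : ℕ) (t : ℂ) : Un n t (y (t - n)) = y t := by
  induction n generalizing t with
  | zero => simp [Un]
  | succ n ih =>
    have h := hy (t - 1)
    rw [sub_add_cancel] at h
    rw [Un_succ, show t - (n + 1 : ℕ) = t - 1 - (n : ℂ) by push_cast; ring, ih]
    linear_combination -h

lemma U_eq_Un_U {U : ℂ → ℂ → ℂ}
    (hU : ∀ s w, 0 < w.re → Tendsto (fun n => Un n s w) atTop (𝓝 (U s w)))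
    {w : ℂ} (hw : 0 < w.re) (k : ℕ) (s : ℂ) : U s w = Un k s (U (s - k) w) := by
  refine tendsto_nhds_unique ((hU s w hw).comp (tendsto_add_atTop_nat k)) ?_
  refine (((continuous_Un k s).tendsto _).comp (hU (s - k) w hw)).congr fun m => ?_
  simp only [Function.comp_apply, add_comm m k, Un_add]

lemma norm_cexp_mul_sub_cexp_mul_le {S : Set ℂ} (hS : Convex ℝ S) {c : ℂ} {B : ℝ}
    (hB : ∀ x ∈ S, ‖c * Complex.exp (c * x)‖ ≤ B) {u u' : ℂ} (hu : u ∈ S) (hu' : u' ∈ S) :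
    ‖Complex.exp (c * u) - Complex.exp (c * u')‖ ≤ B * ‖u - u'‖ := by
  refine hS.norm_image_sub_le_of_norm_hasDerivWithin_le (f := fun x => Complex.exp (c * x))
    (f' := fun x => c * Complex.exp (c * x)) (fun x _ => ?_) hB hu' hu
  have := ((hasDerivAt_id' x).const_mul c).cexp
  exact (by simpa [mul_comm] using this : HasDerivAt _ _ x).hasDerivWithinAt

lemma norm_cexp_sub_natCast_mul_le (t : ℂ) (n : ℕ) {z u : ℂ} {δ : ℝ} (hu : ‖u - z‖ ≤ δ) :
    ‖Complex.exp ((t - n) * u)‖ ≤ Real.exp (‖t‖ * (‖z‖ + δ)) * Real.exp (-(z.re - δ)) ^ n := by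
  have hre : z.re - δ ≤ u.re := by
    linarith [neg_abs_le (u - z).re, abs_re_le_norm (u - z), sub_re u z]
  have hnorm : ‖u‖ ≤ ‖z‖ + δ := by linarith [norm_le_insert' u z]
  have hreal : ((t - n) * u).re = (t * u).re - n * u.re := by simp [sub_mul]
  have htu : (t * u).re ≤ ‖t‖ * (‖z‖ + δ) :=
    calc (t * u).re ≤ ‖t‖ * ‖u‖ := (re_le_norm _).trans (norm_mul t u).le
      _ ≤ ‖t‖ * (‖z‖ + δ) := by gcongr
  have hnu : n * (z.re - δ) ≤ n * u.re := by gcongr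
  rw [Complex.norm_exp, ← Real.exp_nat_mul, ← Real.exp_add, hreal]
  exact Real.exp_le_exp.mpr (by linarith)

section Tail

variable {t z : ℂ} {δ A q : ℝ}

lemma norm_Un_sub_self_le (hq0 : 0 ≤ q) (hq1 : q < 1) (hA : 0 ≤ A)
    (ha : ∀ n : ℕ, ∀ u ∈ closedBall z δ, ‖Complex.exp ((t - n) * u)‖ ≤ A * q ^ n)
    (m j : ℕ) {w : ℂ} (hw : ‖w - z‖ + A * q ^ (j + 1) / (1 - q) ≤ δ) :
    ‖Un m (t - j) w - w‖ ≤ A * q ^ (j + 1) / (1 - q) := by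
  have h1q : 0 < 1 - q := by linarith
  induction m generalizing j with
  | zero => simp only [Un, sub_self, norm_zero]; positivity
  | succ m ih =>
    have htail : A * q ^ (j + 1 + 1) / (1 - q) + A * q ^ (j + 1) = A * q ^ (j + 1) / (1 - q) := by
      field_simp; ring
    have hterm : 0 ≤ A * q ^ (j + 1) := mul_nonneg hA (pow_nonneg hq0 _)
    have hu := ih (j + 1) (by linarith)
    set u := Un m (t - (j + 1 : ℕ)) w
    have hu_mem : u ∈ closedBall z δ := by
      rw [mem_closedBall_iff_norm]
      linarith [norm_sub_le_norm_sub_add_norm_sub u w z]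
    rw [Un_succ_sub_natCast, add_sub_right_comm, ← htail]
    exact (norm_add_le _ _).trans (add_le_add hu (ha _ u hu_mem))

lemma norm_Un_sub_Un_le {ρ : ℝ} {b : ℕ → ℝ}
    (hmaps : ∀ m j : ℕ, ∀ w ∈ closedBall z ρ, Un m (t - j) w ∈ closedBall z δ)
    (hb : ∀ n : ℕ, ∀ u ∈ closedBall z δ, ‖(t - n) * Complex.exp ((t - n) * u)‖ ≤ b n)
    (m j : ℕ) {w w' : ℂ} (hw : w ∈ closedBall z ρ) (hw' : w' ∈ closedBall z ρ) :
    ‖Un m (t - j) w - Un m (t - j) w'‖ ≤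
      Real.exp (∑ i ∈ range m, b (i + j + 1)) * ‖w - w'‖ := by
  induction m generalizing j with
  | zero => simp [Un]
  | succ m ih =>
    have hu := hmaps m (j + 1) w hw
    have hu' := hmaps m (j + 1) w' hw'
    rw [Un_succ_sub_natCast, Un_succ_sub_natCast, add_sub_add_comm]
    set u := Un m (t - (j + 1 : ℕ)) w
    set u' := Un m (t - (j + 1 : ℕ)) w'
    have hexp := norm_cexp_mul_sub_cexp_mul_le (convex_closedBall z δ) (hb (j + 1)) hu hu'
    have hb0 : 0 ≤ b (j + 1) := (norm_nonneg _).trans (hb _ u hu)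
    have hsum : ∑ i ∈ range (m + 1), b (i + j + 1) =
        ∑ i ∈ range m, b (i + (j + 1) + 1) + b (j + 1) := by
      rw [sum_range_succ', zero_add]
      exact congrArg (· + _) (sum_congr rfl fun i _ => by rw [add_right_comm i 1 j, add_assoc i j 1])
    rw [hsum, Real.exp_add]
    calc ‖u - u' + (Complex.exp _ - Complex.exp _)‖ ≤ ‖u - u'‖ + b (j + 1) * ‖u - u'‖ :=
          (norm_add_le _ _).trans (add_le_add le_rfl hexp)
      _ = (1 + b (j + 1)) * ‖u - u'‖ := by ring
      _ ≤ Real.exp (b (j + 1)) * (Real.exp (∑ i ∈ range m, b (i + (j + 1) + 1)) * ‖w - w'‖) :=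
          mul_le_mul (by linarith [Real.add_one_le_exp (b (j + 1))]) (ih (j + 1))
            (norm_nonneg _) (Real.exp_pos _).le
      _ = _ := by ring

lemma Un_sub_natCast_mem_closedBall (hq0 : 0 ≤ q) (hq1 : q < 1) (hA : 0 ≤ A)
    (ha : ∀ n : ℕ, ∀ u ∈ closedBall z δ, ‖Complex.exp ((t - n) * u)‖ ≤ A * q ^ n)
    (hsmall : A * q / (1 - q) ≤ δ / 2) (m j : ℕ) {w : ℂ} (hw : w ∈ closedBall z (δ / 2)) :
    Un m (t - j) w ∈ closedBall z δ := by
  have h1q : 0 < 1 - q := by linarith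
  rw [mem_closedBall_iff_norm] at hw ⊢
  have htail : A * q ^ (j + 1) / (1 - q) ≤ δ / 2 := by
    refine le_trans ?_ hsmall
    gcongr
    exact pow_le_of_le_one hq0 hq1.le (Nat.succ_ne_zero j)
  have hdisp := norm_Un_sub_self_le hq0 hq1 hA ha m j (w := w) (by linarith)
  linarith [norm_sub_le_norm_sub_add_norm_sub (Un m (t - j) w) w z]

end Tail

lemma summable_add_natCast_mul_geometric {q : ℝ} (hq0 : 0 ≤ q) (hq1 : q < 1) (c A : ℝ) :
    Summable fun n : ℕ => (c + n) * (A * q ^ n) := by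
  have hgeom := summable_geometric_of_lt_one hq0 hq1
  have hpow : Summable fun n : ℕ => (n : ℝ) * q ^ n := by
    simpa using summable_pow_mul_geometric_of_norm_lt_one (R := ℝ) 1
      (by rwa [Real.norm_eq_abs, abs_of_nonneg hq0])
  exact ((hgeom.mul_left (c * A)).add (hpow.mul_left A)).congr fun n => by ring

lemma tendsto_comp_sub_natCast {y : ℂ → ℂ} {z : ℂ}
    (hy : ∀ M : ℝ, ∀ ε > (0 : ℝ), ∃ R : ℝ, ∀ s : ℂ, s.re ≤ -R → |s.im| ≤ M → ‖y s - z‖ < ε)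
    (t : ℂ) : Tendsto (fun m : ℕ => y (t - m)) atTop (𝓝 z) := by
  rw [Metric.tendsto_atTop]
  intro ε hε
  obtain ⟨R, hR⟩ := hy |t.im| ε hε
  obtain ⟨N, hN⟩ := exists_nat_ge (R + t.re)
  refine ⟨N, fun m hm => (dist_eq_norm _ _).trans_lt (hR _ ?_ (by simp))⟩
  have : (N : ℝ) ≤ m := Nat.cast_le.mpr hm
  simp only [sub_re, natCast_re]
  linarith

section Uniqueness

variable {U : ℂ → ℂ → ℂ} {y : ℂ → ℂ} {z : ℂ} {δ A q : ℝ}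

lemma eq_U_of_norm_cexp_le_of_small
    (hU : ∀ s w, 0 < w.re → Tendsto (fun n => Un n s w) atTop (𝓝 (U s w)))
    (hy : ∀ s, y (s + 1) - y s = Complex.exp (s * y s)) (hz : 0 < z.re) {t : ℂ}
    (hyt : Tendsto (fun m : ℕ => y (t - m)) atTop (𝓝 z)) (hδ : 0 < δ) (hq0 : 0 ≤ q) (hq1 : q < 1)
    (hA : 0 ≤ A) (hsmall : A * q / (1 - q) ≤ δ / 2)
    (ha : ∀ n : ℕ, ∀ u ∈ closedBall z δ, ‖Complex.exp ((t - n) * u)‖ ≤ A * q ^ n) :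
    y t = U t z := by
  have hmaps : ∀ m j : ℕ, ∀ w ∈ closedBall z (δ / 2), Un m (t - j) w ∈ closedBall z δ :=
    fun m j _ hw => Un_sub_natCast_mem_closedBall hq0 hq1 hA ha hsmall m j hw
  set b : ℕ → ℝ := fun n => (‖t‖ + n) * (A * q ^ n)
  have hb0 : ∀ n, 0 ≤ b n := fun n => by positivity
  have hb : ∀ n : ℕ, ∀ u ∈ closedBall z δ, ‖(t - n) * Complex.exp ((t - n) * u)‖ ≤ b n := by
    intro n u hu
    rw [norm_mul]
    exact mul_le_mul ((norm_sub_le _ _).trans (by simp)) (ha n u hu) (norm_nonneg _) (by positivity)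
  have hbs : Summable b := summable_add_natCast_mul_geometric hq0 hq1 ‖t‖ A
  have hlip : ∀ m : ℕ, ∀ w ∈ closedBall z (δ / 2),
      ‖Un m t w - Un m t z‖ ≤ Real.exp (∑' n, b n) * ‖w - z‖ := by
    intro m w hw
    have h := norm_Un_sub_Un_le hmaps hb m 0 hw (mem_closedBall_self (by linarith))
    simp only [Nat.cast_zero, sub_zero, add_zero] at h
    refine h.trans (mul_le_mul_of_nonneg_right (Real.exp_le_exp.mpr ?_) (norm_nonneg _))
    calc ∑ i ∈ range m, b (i + 1) ≤ ∑ i ∈ range (m + 1), b i := by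
          rw [sum_range_succ']; linarith [hb0 0]
      _ ≤ ∑' n, b n := hbs.sum_le_tsum _ fun n _ => hb0 n
  have hconv : Tendsto (fun m : ℕ => Un m t z) atTop (𝓝 (y t)) := by
    rw [tendsto_iff_norm_sub_tendsto_zero]
    have hyz := (tendsto_iff_norm_sub_tendsto_zero.mp hyt).const_mul (Real.exp (∑' n, b n))
    rw [mul_zero] at hyz
    refine squeeze_zero' (Eventually.of_forall fun _ => norm_nonneg _) ?_ hyz
    filter_upwards [hyt.eventually (closedBall_mem_nhds z (half_pos hδ))] with m hm
    rw [← Un_apply_sub_natCast hy m t, norm_sub_rev]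
    exact hlip m _ hm
  exact tendsto_nhds_unique hconv (hU t z hz)

lemma eq_U_of_norm_cexp_le
    (hU : ∀ s w, 0 < w.re → Tendsto (fun n => Un n s w) atTop (𝓝 (U s w)))
    (hy : ∀ s, y (s + 1) - y s = Complex.exp (s * y s)) (hz : 0 < z.re) {s : ℂ}
    (hys : Tendsto (fun m : ℕ => y (s - m)) atTop (𝓝 z)) (hδ : 0 < δ) (hq0 : 0 ≤ q) (hq1 : q < 1)
    (hA : 0 ≤ A) (ha : ∀ n : ℕ, ∀ u ∈ closedBall z δ, ‖Complex.exp ((s - n) * u)‖ ≤ A * q ^ n) :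
    y s = U s z := by
  obtain ⟨k, hk⟩ : ∃ k : ℕ, A * q ^ k * q / (1 - q) ≤ δ / 2 := by
    have h : Tendsto (fun k : ℕ => A * q ^ k * q / (1 - q)) atTop (𝓝 0) := by
      simpa using (((tendsto_pow_atTop_nhds_zero_of_lt_one hq0 hq1).const_mul A).mul_const q)
        |>.div_const (1 - q)
    exact (h.eventually (ge_mem_nhds (by linarith))).exists
  have hyk : y (s - k) = U (s - k) z := by
    refine eq_U_of_norm_cexp_le_of_small hU hy hz ?_ hδ hq0 hq1 (by positivity) hk fun n u hu => ?_
    · refine ((hys.comp (tendsto_add_atTop_nat k)).congr fun m => ?_)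
      simp only [Function.comp_apply, Nat.cast_add, sub_sub, add_comm]
    · rw [sub_sub, ← Nat.cast_add, mul_assoc, ← pow_add]
      exact ha (k + n) u hu
  rw [← Un_apply_sub_natCast hy k s, hyk, ← U_eq_Un_U hU hz]

end Uniqueness

theorem stmt_16_general (z : ℂ) (hz : 0 < z.re) (U : ℂ → ℂ → ℂ)
    (hU : ∀ (s w : ℂ), 0 < w.re → Tendsto (fun n => Un n s w) atTop (nhds (U s w)))
    (y : ℂ → ℂ)
    (hy_eq : ∀ s : ℂ, y (s + 1) - y s = Complex.exp (s * y s))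
    (hy_lim : ∀ M : ℝ, ∀ ε > (0 : ℝ), ∃ R : ℝ, ∀ s : ℂ,
      s.re ≤ -R → |s.im| ≤ M → ‖y s - z‖ < ε) :
    ∀ s : ℂ, y s = U s z := by
  intro s
  have hq1 : Real.exp (-(z.re / 2)) < 1 := Real.exp_lt_one_iff.mpr (by linarith)
  refine eq_U_of_norm_cexp_le (A := Real.exp (‖s‖ * (‖z‖ + z.re / 2))) hU hy_eq hz
    (tendsto_comp_sub_natCast hy_lim s) (half_pos hz) (Real.exp_pos _).le hq1 (Real.exp_pos _).le
    fun n u hu => ?_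
  have h := norm_cexp_sub_natCast_mul_le s n (mem_closedBall_iff_norm.mp hu)
  rwa [sub_half] at h

theorem stmt_16 (z : ℂ) (hz : 0 < z.re) (U : ℂ → ℂ → ℂ)
    (hU : ∀ (s w : ℂ), 0 < w.re → Tendsto (fun n => Un n s w) atTop (nhds (U s w)))
    (y : ℂ → ℂ) (hy_diff : Differentiable ℂ y)
    (hy_eq : ∀ s : ℂ, y (s + 1) - y s = Complex.exp (s * y s))
    (hy_lim : ∀ M : ℝ, ∀ ε > (0 : ℝ), ∃ R : ℝ, ∀ s : ℂ,
      s.re ≤ -R → |s.im| ≤ M → ‖y s - z‖ < ε) :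
    ∀ s : ℂ, y s = U s z :=
  stmt_16_general z hz U hU y hy_eq hy_lim
end
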